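/- arXiv:1709.01594 — 2 statements merged into one kernel-verified Lean document; each statement's English description precedes it below -/
import Mathlib

section
/- Let τ be a positive integer. For s ∈ [0,2], define Υ⁽²⁾(s) = −2·( max_{0 ≤ i ≤ τ−1} [ (s/2)(τ − i) + (1 − s/2)(i + 1) ] − τ/2 ). Then Υ⁽²⁾(s) = (1 − τ)·|1 − s| − 1. -/
/-- for a positive integer `τ` and `s ∈ [0,2]`,
`Υ⁽²⁾(s) = -2·(max_{0 ≤ i ≤ τ-1}[(s/2)(τ-i) + (1-s/2)(i+1)] - τ/2)`
equals `(1-τ)·|1-s| - 1`. -/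
theorem stmt_10 (τ : ℕ) (hτ : 0 < τ) (s : ℝ) (hs : s ∈ Set.Icc (0:ℝ) 2) :
    -2 * ((Finset.range τ).sup' ⟨0, Finset.mem_range.mpr hτ⟩
        (fun i => s/2 * ((τ:ℝ) - i) + (1 - s/2) * ((i:ℝ) + 1)) - (τ:ℝ)/2) =
      (1 - (τ:ℝ)) * |1 - s| - 1 := by
  obtain ⟨hs0, hs2⟩ := hs
  have hτ1 : ((τ - 1 : ℕ) : ℝ) = (τ : ℝ) - 1 := by
    have h1 : (1:ℕ) ≤ τ := hτ
    push_cast [Nat.cast_sub h1]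
    ring
  rcases le_total s 1 with h1 | h1
  · have hsup : (Finset.range τ).sup' ⟨0, Finset.mem_range.mpr hτ⟩
        (fun i => s/2 * ((τ:ℝ) - i) + (1 - s/2) * ((i:ℝ) + 1)) =
        s/2 * ((τ:ℝ) - ((τ-1:ℕ):ℝ)) + (1 - s/2) * (((τ-1:ℕ):ℝ) + 1) := by
      apply le_antisymm
      · apply Finset.sup'_le
        intro i hi
        have hi' : (i:ℝ) ≤ ((τ-1:ℕ):ℝ) := by
          exact_mod_cast Nat.le_pred_of_lt (Finset.mem_range.mp hi)
        nlinarith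
      · exact Finset.le_sup' (fun i : ℕ => s/2 * ((τ:ℝ) - i) + (1 - s/2) * ((i:ℝ) + 1))
          (Finset.mem_range.mpr (Nat.pred_lt hτ.ne'))
    rw [hsup, hτ1, abs_of_nonneg (by linarith)]
    ring
  · have hsup : (Finset.range τ).sup' ⟨0, Finset.mem_range.mpr hτ⟩
        (fun i => s/2 * ((τ:ℝ) - i) + (1 - s/2) * ((i:ℝ) + 1)) =
        s/2 * ((τ:ℝ) - ((0:ℕ):ℝ)) + (1 - s/2) * (((0:ℕ):ℝ) + 1) := by
      apply le_antisymm
      · apply Finset.sup'_le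
        intro i hi
        have hi' : (0:ℝ) ≤ (i:ℝ) := Nat.cast_nonneg i
        nlinarith
      · exact Finset.le_sup' (fun i : ℕ => s/2 * ((τ:ℝ) - i) + (1 - s/2) * ((i:ℝ) + 1))
          (Finset.mem_range.mpr hτ)
    rw [hsup, abs_of_nonpos (by linarith)]
    push_cast
    ring
end

section
/- Let S_* = S_*(a_1,…,a_{2k}) be a staircase with points (n_i, m_i) as usual, and suppose t ∈ (0,2) is such that the minimum μ = min_i [(t/2)n_i + (1 − t/2)m_i] is attained at more than one index. Let i₋ < i₊ be the minimal and maximal minimizing indices. Then the Kim–Livingston secondary invariant Υ⁽²⁾_{S_*,t}(s) = −2·( max_{i₋ ≤ j < i₊} [ (s/2)n_j + (1 − s/2)m_{j+1} ] − μ ). -/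
/-!
Over `ℤ/2` the boundary `T ↦ T ∆ (T + 1)` of 1-chains in the `y_j` is injective: whether
`j + 1 ∈ T` is determined by whether `j ∈ T` and whether `j + 1` lies in the boundary. Since
`∑_{i₋ ≤ j < i₊} y_j` has boundary `x_{i₋} + x_{i₊}`, it is the only connecting chain, so the
infimum defining `Υ⁽²⁾` is taken over a single filtration level.
-/

namespace Staircase

open Finset

/-- `T` stands for the chain `∑_{j ∈ T} y_j`, and `∂ y_j = x_j + x_{j+1}`. -/
def boundary (T : Finset ℕ) : Finset ℕ := symmDiff T (T.image (· + 1))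

theorem zero_mem_boundary_iff (T : Finset ℕ) : 0 ∈ boundary T ↔ 0 ∈ T := by
  simp [boundary, mem_symmDiff]

theorem succ_mem_iff (T : Finset ℕ) (j : ℕ) : j + 1 ∈ T ↔ (j + 1 ∈ boundary T ↔ j ∉ T) := by
  simp only [boundary, mem_symmDiff, mem_image, Nat.add_right_cancel_iff, exists_eq_right]
  tauto

theorem boundary_injective : Function.Injective boundary := by
  intro T T' h
  ext j
  induction j with
  | zero => rw [← zero_mem_boundary_iff, h, zero_mem_boundary_iff]
  | succ j ih => rw [succ_mem_iff, succ_mem_iff T', h, ih]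

theorem boundary_Ico {a b : ℕ} (h : a < b) : boundary (Ico a b) = {a, b} := by
  ext j
  simp only [boundary, mem_symmDiff, mem_image, mem_Ico, mem_insert, mem_singleton]
  constructor
  · rintro (⟨hj, hn⟩ | ⟨⟨i, hi, rfl⟩, hn⟩)
    · by_contra hne
      exact hn ⟨j - 1, by omega, by omega⟩
    · omega
  · rintro (rfl | rfl)
    · exact Or.inl ⟨⟨le_rfl, h⟩, by rintro ⟨i, hi, hia⟩; omega⟩
    · exact Or.inr ⟨⟨j - 1, by omega, by omega⟩, by omega⟩

theorem eq_Ico_of_boundary_eq {a b : ℕ} (h : a < b) {T : Finset ℕ}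
    (hT : boundary T = {a, b}) : T = Ico a b :=
  boundary_injective (hT.trans (boundary_Ico h).symm)

theorem setOf_sup'_of_boundary_eq_pair {α : Type*} [SemilatticeSup α] (f : ℕ → α) {a b k : ℕ}
    (h : a < b) (hb : b ≤ k) :
    {r : α | ∃ T : Finset ℕ, T ⊆ range k ∧ boundary T = {a, b} ∧
      ∃ hT : T.Nonempty, r = T.sup' hT f} = {(Ico a b).sup' (nonempty_Ico.mpr h) f} := by
  ext r
  constructor
  · rintro ⟨T, -, hT, hne, rfl⟩
    obtain rfl := eq_Ico_of_boundary_eq h hT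
    rfl
  · rintro rfl
    refine ⟨Ico a b, fun j hj => ?_, boundary_Ico h, nonempty_Ico.mpr h, rfl⟩
    simp only [mem_Ico, mem_range] at hj ⊢
    omega

end Staircase

theorem stmt_11 (k : ℕ)
    (n m : ℕ → ℝ)
    (s : ℝ)
    (μ : ℝ)
    (im ip : ℕ) (hlt : im < ip) (hip : ip ≤ k) :
    -2 * (sInf {r : ℝ | ∃ T : Finset ℕ, T ⊆ Finset.range k ∧
        symmDiff T (T.image (· + 1)) = ({im, ip} : Finset ℕ) ∧
        ∃ hT : T.Nonempty,
          r = T.sup' hT (fun j => s/2 * n j + (1 - s/2) * m (j+1))} - μ) =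
      -2 * ((Finset.Ico im ip).sup' (Finset.nonempty_Ico.mpr hlt)
        (fun j => s/2 * n j + (1 - s/2) * m (j+1)) - μ) := by
  simp only [← Staircase.boundary.eq_def]
  rw [Staircase.setOf_sup'_of_boundary_eq_pair _ hlt hip, csInf_singleton]
end
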